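/- (Achronal causal curves are null geodesics, Minkowski version.) Let n ≥ 1 and let γ : I → ℝ^{1+n} be a future-directed causal curve which is achronal, i.e. for no s, s' ∈ I does γ(s') lie in the timelike future I^+(γ(s)). Then the image of γ is contained in a single null ray: there exist x₀ ∈ ℝ^{1+n} and a null future-directed vector v such that γ(s) ∈ { x₀ + t·v : t ∈ ℝ } for every s ∈ I. -/

import Mathlib

/-!
Every increment `γ b - γ a` (`a ≤ b`) of a causal curve is causal or zero: the functionals
`x ↦ x⁰ - ⟪u, x⃗⟫` with `‖u‖ ≤ 1` are nonnegative on causal vectors, and a Lipschitz function with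
a.e. nonnegative derivative is nondecreasing (it is absolutely continuous). A timelike increment
would be joined by a straight timelike segment, so achronality makes every increment null.
By strict convexity of the Euclidean norm, if `p`, `q` and `p + q` are all null then `p` and `q`
are positively proportional; hence all increments lie on one ray, spanned by any nonzero one.
-/

open Set MeasureTheory Filter Topology
open scoped RealInnerProductSpace

noncomputable section

/-- Minkowski space-time `ℝ^{1+n} = ℝ × ℝ^n`. -/
abbrev Mink (n : ℕ) : Type := ℝ × EuclideanSpace ℝ (Fin n)

/-- A vector is timelike future-directed if `v⁰ > |v⃗|`. -/
def timelikeFD {n : ℕ} (v : Mink n) : Prop := ‖v.2‖ < v.1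

/-- A vector is causal future-directed if `v ≠ 0` and `v⁰ ≥ |v⃗|`. -/
def causalFD {n : ℕ} (v : Mink n) : Prop := v ≠ 0 ∧ ‖v.2‖ ≤ v.1

/-- A vector is null future-directed if `v ≠ 0` and `v⁰ = |v⃗|`. -/
def nullFD {n : ℕ} (v : Mink n) : Prop := v ≠ 0 ∧ ‖v.2‖ = v.1

/-- A vector is causal past-directed if `-v` is causal future-directed. -/
def causalPD {n : ℕ} (v : Mink n) : Prop := causalFD (-v)

/-- The Minkowski bilinear form `η(x,y) = -x⁰y⁰ + ⟨x⃗,y⃗⟩`. -/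
def minkBF {n : ℕ} (x y : Mink n) : ℝ := -(x.1 * y.1) + ⟪x.2, y.2⟫

/-- The Euclidean norm on `ℝ^{1+n}`. -/
def eNorm {n : ℕ} (v : Mink n) : ℝ := Real.sqrt (v.1 ^ 2 + ‖v.2‖ ^ 2)

/-- A future-directed causal curve defined on `S ⊆ ℝ`: locally Lipschitz, with
almost-everywhere derivative causal future-directed. -/
def IsCausalCurveOn {n : ℕ} (γ : ℝ → Mink n) (S : Set ℝ) : Prop :=
  (∀ a b : ℝ, Icc a b ⊆ S → ∃ K : NNReal, LipschitzOnWith K γ (Icc a b)) ∧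
  (∀ᵐ s ∂(volume.restrict S), ∃ v : Mink n, HasDerivWithinAt γ v S s ∧ causalFD v)

/-- A future-directed timelike curve defined on `S ⊆ ℝ`. -/
def IsTimelikeCurveOn {n : ℕ} (γ : ℝ → Mink n) (S : Set ℝ) : Prop :=
  (∀ a b : ℝ, Icc a b ⊆ S → ∃ K : NNReal, LipschitzOnWith K γ (Icc a b)) ∧
  (∀ᵐ s ∂(volume.restrict S), ∃ v : Mink n, HasDerivWithinAt γ v S s ∧ timelikeFD v)

/-- A past-directed causal curve defined on `S ⊆ ℝ`. -/
def IsPastCausalCurveOn {n : ℕ} (γ : ℝ → Mink n) (S : Set ℝ) : Prop :=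
  (∀ a b : ℝ, Icc a b ⊆ S → ∃ K : NNReal, LipschitzOnWith K γ (Icc a b)) ∧
  (∀ᵐ s ∂(volume.restrict S), ∃ v : Mink n, HasDerivWithinAt γ v S s ∧ causalPD v)

/-- `chron p q`: there is a future-directed timelike curve from `p` to `q`. -/
def chron {n : ℕ} (p q : Mink n) : Prop :=
  ∃ (a b : ℝ) (γ : ℝ → Mink n), a < b ∧ IsTimelikeCurveOn γ (Icc a b) ∧ γ a = p ∧ γ b = q

/-- `caus p q`: `q = p`, or there is a future-directed causal curve from `p` to `q`. -/
def caus {n : ℕ} (p q : Mink n) : Prop :=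
  p = q ∨ ∃ (a b : ℝ) (γ : ℝ → Mink n), a < b ∧ IsCausalCurveOn γ (Icc a b) ∧ γ a = p ∧ γ b = q

/-- `causPast p q`: `q = p`, or there is a past-directed causal curve from `p` to `q`. -/
def causPast {n : ℕ} (p q : Mink n) : Prop :=
  p = q ∨ ∃ (a b : ℝ) (γ : ℝ → Mink n), a < b ∧ IsPastCausalCurveOn γ (Icc a b) ∧ γ a = p ∧ γ b = q

/-- The timelike future `I⁺(U)`. -/
def Iplus {n : ℕ} (U : Set (Mink n)) : Set (Mink n) := {q | ∃ p ∈ U, chron p q}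

/-- The causal future `J⁺(U)`. -/
def Jplus {n : ℕ} (U : Set (Mink n)) : Set (Mink n) := {q | ∃ p ∈ U, caus p q}

/-- The causal past `J⁻(U)`. -/
def Jminus {n : ℕ} (U : Set (Mink n)) : Set (Mink n) := {q | ∃ p ∈ U, causPast p q}

/-- An inextendible future-directed timelike curve: defined on all of `ℝ`, locally
Lipschitz, parameterized by Euclidean arclength, with a.e. timelike future derivative. -/
def IsInextTimelike {n : ℕ} (γ : ℝ → Mink n) : Prop :=
  LocallyLipschitz γ ∧
  ∀ᵐ s : ℝ, ∃ v : Mink n, HasDerivAt γ v s ∧ timelikeFD v ∧ eNorm v = 1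

theorem LipschitzOnWith.le_of_ae_hasDerivWithinAt_nonneg {g : ℝ → ℝ} {a b : ℝ} {K : NNReal}
    (hab : a ≤ b) (hg : LipschitzOnWith K g (Icc a b))
    (hd : ∀ᵐ x ∂volume.restrict (Icc a b), ∃ v, HasDerivWithinAt g v (Icc a b) x ∧ 0 ≤ v) :
    g a ≤ g b := by
  have hac := (uIcc_of_le hab ▸ hg).absolutelyContinuousOnInterval
  have hderiv : 0 ≤ᵐ[volume.restrict (Icc a b)] deriv g := by
    rw [← Measure.restrict_congr_set Ioo_ae_eq_Icc] at hd ⊢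
    filter_upwards [hd, ae_restrict_mem measurableSet_Ioo] with x ⟨v, hv, hv0⟩ hx
    rwa [(hv.hasDerivAt (Icc_mem_nhds hx.1 hx.2)).deriv]
  rw [← sub_nonneg, ← hac.integral_deriv_eq_sub]
  exact intervalIntegral.integral_nonneg_of_ae_restrict hab hderiv

theorem chron_of_timelikeFD_sub {n : ℕ} {p q : Mink n} (h : timelikeFD (q - p)) : chron p q :=
  ⟨0, 1, AffineMap.lineMap p q, one_pos,
    ⟨fun _ _ _ => ⟨_, (lipschitzWith_lineMap p q).lipschitzOnWith⟩,
      ae_of_all _ fun _ => ⟨q - p, AffineMap.hasDerivWithinAt_lineMap, h⟩⟩,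
    AffineMap.lineMap_apply_zero p q, AffineMap.lineMap_apply_one p q⟩

namespace IsCausalCurveOn

variable {n : ℕ} {I : Set ℝ} {γ : ℝ → Mink n}

theorem inner_sub_snd_le_sub_fst (hγ : IsCausalCurveOn γ I) {a b : ℝ} (hab : a ≤ b)
    (hI : Icc a b ⊆ I) {u : EuclideanSpace ℝ (Fin n)} (hu : ‖u‖ ≤ 1) :
    ⟪u, (γ b - γ a).2⟫ ≤ (γ b - γ a).1 := by
  let L : Mink n →L[ℝ] ℝ :=
    .fst ℝ ℝ _ - (innerSL ℝ u).comp (.snd ℝ ℝ (EuclideanSpace ℝ (Fin n)))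
  have hL : ∀ x, L x = x.1 - ⟪u, x.2⟫ := fun _ => rfl
  obtain ⟨K, hK⟩ := hγ.1 a b hI
  have hd : ∀ᵐ x ∂volume.restrict (Icc a b),
      ∃ w, HasDerivWithinAt (L ∘ γ) w (Icc a b) x ∧ 0 ≤ w := by
    filter_upwards [ae_mono (Measure.restrict_mono hI le_rfl) hγ.2] with x ⟨v, hv, hv_causal⟩
    refine ⟨L v, L.hasFDerivAt.comp_hasDerivWithinAt x (hv.mono hI), ?_⟩
    have huv : ⟪u, v.2⟫ ≤ ‖v.2‖ :=
      (real_inner_le_norm u v.2).trans (mul_le_of_le_one_left (norm_nonneg _) hu)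
    rw [hL]
    linarith [hv_causal.2]
  have hmono := (L.lipschitz.comp_lipschitzOnWith hK).le_of_ae_hasDerivWithinAt_nonneg hab hd
  simp only [Function.comp_apply, hL] at hmono
  simp only [Prod.fst_sub, Prod.snd_sub, inner_sub_right]
  linarith

theorem norm_sub_snd_le_sub_fst (hγ : IsCausalCurveOn γ I) (hI : I.OrdConnected) {a b : ℝ}
    (ha : a ∈ I) (hb : b ∈ I) (hab : a ≤ b) : ‖(γ b - γ a).2‖ ≤ (γ b - γ a).1 := by
  set w := (γ b - γ a).2
  have hu : ‖‖w‖⁻¹ • w‖ ≤ 1 := by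
    rw [norm_smul, norm_inv, norm_norm]
    exact inv_mul_le_one_of_le₀ le_rfl (norm_nonneg _)
  calc ‖w‖ = ⟪‖w‖⁻¹ • w, w⟫ := by
        rw [real_inner_smul_left, real_inner_self_eq_norm_sq, sq, ← mul_assoc, inv_mul_mul_self]
    _ ≤ (γ b - γ a).1 := hγ.inner_sub_snd_le_sub_fst hab (hI.out ha hb) hu

end IsCausalCurveOn

def nullOrZeroFD {n : ℕ} (v : Mink n) : Prop := ‖v.2‖ = v.1

namespace nullOrZeroFD

variable {n : ℕ} {p q : Mink n}

theorem fst_nonneg (hp : nullOrZeroFD p) : 0 ≤ p.1 := hp ▸ norm_nonneg _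

theorem eq_zero_of_fst_eq_zero (hp : nullOrZeroFD p) (h : p.1 = 0) : p = 0 :=
  Prod.ext h (norm_eq_zero.1 (hp.trans h))

theorem sameRay_of_add (hp : nullOrZeroFD p) (hq : nullOrZeroFD q)
    (hpq : nullOrZeroFD (p + q)) : SameRay ℝ p q := by
  -- equality case of the triangle inequality in the strictly convex space `ℝⁿ`
  have hray : SameRay ℝ p.2 q.2 := by
    rw [sameRay_iff_norm_add, ← Prod.snd_add, hpq, hp, hq, Prod.fst_add]
  obtain ⟨a, b, ha, hb, -, hpa, hqb⟩ := hray.exists_eq_smul_add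
  have lift : ∀ {r : Mink n} {c : ℝ}, nullOrZeroFD r → 0 ≤ c → r.2 = c • (p + q).2 →
      r = c • (p + q) := fun {r c} hr hc hrc => by
    refine Prod.ext ?_ hrc
    rw [Prod.smul_fst, ← hr, ← hpq, hrc, norm_smul, Real.norm_of_nonneg hc, smul_eq_mul]
  have h := sameRay_smul_smul_of_mul_nonneg (v := p + q) (mul_nonneg ha hb)
  rwa [← lift hp ha hpa, ← lift hq hb hqb] at h

end nullOrZeroFD

theorem exists_nullFD {n : ℕ} (hn : 1 ≤ n) : ∃ v : Mink n, nullFD v :=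
  ⟨(1, EuclideanSpace.single ⟨0, hn⟩ 1), by simp [nullFD, Prod.ext_iff]⟩

def HasNullIncrementsOn {n : ℕ} (γ : ℝ → Mink n) (I : Set ℝ) : Prop :=
  ∀ a ∈ I, ∀ b ∈ I, a ≤ b → nullOrZeroFD (γ b - γ a)

theorem IsCausalCurveOn.hasNullIncrementsOn {n : ℕ} {I : Set ℝ} {γ : ℝ → Mink n}
    (hγ : IsCausalCurveOn γ I) (hI : I.OrdConnected)
    (hach : ∀ s ∈ I, ∀ s' ∈ I, ¬ chron (γ s) (γ s')) : HasNullIncrementsOn γ I :=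
  fun a ha b hb hab => (hγ.norm_sub_snd_le_sub_fst hI ha hb hab).eq_of_not_lt
    fun h => hach a ha b hb (chron_of_timelikeFD_sub h)

namespace HasNullIncrementsOn

variable {n : ℕ} {I : Set ℝ} {γ : ℝ → Mink n} {a b c d : ℝ}

theorem sub_eq_zero_of_nested (h : HasNullIncrementsOn γ I)
    (ha : a ∈ I) (hb : b ∈ I) (hc : c ∈ I) (hd : d ∈ I) (hab : a ≤ b) (hbc : b ≤ c) (hcd : c ≤ d)
    (had : γ d - γ a = 0) : γ c - γ b = 0 := by
  refine (h b hb c hc hbc).eq_zero_of_fst_eq_zero ?_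
  have hsum : (γ b - γ a).1 + (γ c - γ b).1 + (γ d - γ c).1 = (γ d - γ a).1 := by
    simp only [Prod.fst_sub]; ring
  rw [had, Prod.fst_zero] at hsum
  linarith [(h a ha b hb hab).fst_nonneg, (h b hb c hc hbc).fst_nonneg,
    (h c hc d hd hcd).fst_nonneg]

theorem sameRay_consecutive (h : HasNullIncrementsOn γ I) (ha : a ∈ I) (hb : b ∈ I) (hc : c ∈ I)
    (hab : a ≤ b) (hbc : b ≤ c) : SameRay ℝ (γ b - γ a) (γ c - γ b) :=
  (h a ha b hb hab).sameRay_of_add (h b hb c hc hbc)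
    (by rw [sub_add_sub_cancel']; exact h a ha c hc (hab.trans hbc))

theorem sameRay_nested (h : HasNullIncrementsOn γ I)
    (ha : a ∈ I) (hb : b ∈ I) (hc : c ∈ I) (hd : d ∈ I)
    (hab : a ≤ b) (hbc : b ≤ c) (hcd : c ≤ d) : SameRay ℝ (γ c - γ b) (γ d - γ a) := by
  have inner : SameRay ℝ (γ c - γ b) (γ d - γ b) := by
    simpa only [sub_add_sub_cancel'] using
      SameRay.rfl.add_right (h.sameRay_consecutive hb hc hd hbc hcd)
  have outer : SameRay ℝ (γ d - γ b) (γ d - γ a) := by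
    simpa only [sub_add_sub_cancel] using
      SameRay.rfl.add_right (h.sameRay_consecutive ha hb hd hab (hbc.trans hcd)).symm
  exact inner.trans outer fun hbd =>
    .inl (h.sub_eq_zero_of_nested hb hb hc hd le_rfl hbc hcd hbd)

theorem sameRay (h : HasNullIncrementsOn γ I) (ha : a ∈ I) (hb : b ∈ I) (hc : c ∈ I) (hd : d ∈ I)
    (hab : a ≤ b) (hcd : c ≤ d) : SameRay ℝ (γ b - γ a) (γ d - γ c) := by
  have hm : min a c ∈ I := by rcases min_choice a c with e | e <;> rw [e] <;> assumption
  have hM : max b d ∈ I := by rcases max_choice b d with e | e <;> rw [e] <;> assumption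
  have hab' := h.sameRay_nested hm ha hb hM (min_le_left a c) hab (le_max_left b d)
  have hcd' := h.sameRay_nested hm hc hd hM (min_le_right a c) hcd (le_max_right b d)
  exact hab'.trans hcd'.symm fun h0 => .inl <| h.sub_eq_zero_of_nested hm ha hb hM
    (min_le_left a c) hab (le_max_left b d) h0

theorem exists_eq_add_smul (h : HasNullIncrementsOn γ I) (ha : a ∈ I) (hb : b ∈ I) (hab : a ≤ b)
    (hne : γ b ≠ γ a) {s : ℝ} (hs : s ∈ I) : ∃ t : ℝ, γ s = γ a + t • (γ b - γ a) := by
  have hv : γ b - γ a ≠ 0 := sub_ne_zero.2 hne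
  rcases le_total a s with has | hsa
  · obtain ⟨t, -, ht⟩ := (h.sameRay ha hs ha hb has hab).exists_nonneg_right hv
    exact ⟨t, by rw [← ht, add_sub_cancel]⟩
  · obtain ⟨t, -, ht⟩ := (h.sameRay hs ha ha hb hsa hab).exists_nonneg_right hv
    exact ⟨-t, by rw [neg_smul, ← ht, ← sub_eq_add_neg, sub_sub_cancel]⟩

end HasNullIncrementsOn

/-- achronal causal curves are null geodesics, Minkowski version: an
achronal future-directed causal curve has image contained in a single null ray. -/
theorem achronal_causal_curve_is_null_ray (n : ℕ) (hn : 1 ≤ n)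
    (I : Set ℝ) (hI : I.OrdConnected)
    (γ : ℝ → Mink n) (hγ : IsCausalCurveOn γ I)
    (hach : ∀ s ∈ I, ∀ s' ∈ I, ¬ chron (γ s) (γ s')) :
    ∃ (x₀ v : Mink n), nullFD v ∧ ∀ s ∈ I, ∃ t : ℝ, γ s = x₀ + t • v := by
  have hnull := hγ.hasNullIncrementsOn hI hach
  by_cases hmoves : ∃ a ∈ I, ∃ b ∈ I, a ≤ b ∧ γ b ≠ γ a
  · obtain ⟨a, ha, b, hb, hab, hne⟩ := hmoves
    exact ⟨γ a, γ b - γ a, ⟨sub_ne_zero.2 hne, hnull a ha b hb hab⟩,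
      fun s hs => hnull.exists_eq_add_smul ha hb hab hne hs⟩
  push Not at hmoves
  obtain ⟨v, hv⟩ := exists_nullFD hn
  rcases I.eq_empty_or_nonempty with rfl | ⟨a, ha⟩
  · exact ⟨0, v, hv, by simp⟩
  refine ⟨γ a, v, hv, fun s hs => ⟨0, ?_⟩⟩
  rcases le_total a s with has | hsa
  · simp [hmoves a ha s hs has]
  · simp [hmoves s hs a ha hsa]
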